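/- arXiv:1104.0023 — 3 statements merged into one kernel-verified Lean document; each statement's English description precedes it below -/
import Mathlib

section
/- For any symmetric trace-free bilinear form T on an n-dimensional real inner product space (n ≥ 2), the cubic trace satisfies tr(T³) ≥ -((n-2)/√(n(n-1))) · |T|³, where |T| is the Frobenius norm. -/
/-!
Diagonalising `T`, the claim is a statement about reals `μᵢ` with `∑ μᵢ = 0` and `∑ μᵢ² = s²`.
Cauchy–Schwarz on the other coordinates gives `μᵢ ≥ -(n-1) a` with `a = s / √(n(n-1))`, so
`∑ (μᵢ - a)² (μᵢ + (n-1) a) ≥ 0`; expanding the cube, this is exactly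
`∑ μᵢ³ ≥ -(n-2) a s²`. The value of `a` comes from the equality case, where all but one `μᵢ` equal `a`.
-/

open Matrix Finset

namespace Matrix.IsHermitian

variable {𝕜 n : Type*} [RCLike 𝕜] [Fintype n] [DecidableEq n] {A : Matrix n n 𝕜}

theorem trace_pow_eq_sum_eigenvalues_pow (hA : A.IsHermitian) (k : ℕ) :
    (A ^ k).trace = ∑ i, (hA.eigenvalues i : 𝕜) ^ k := by
  conv_lhs => rw [hA.spectral_theorem, ← map_pow, Unitary.conjStarAlgAut_apply, trace_mul_cycle,
    Unitary.coe_star_mul_self, one_mul, diagonal_pow, trace_diagonal]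
  rfl

end Matrix.IsHermitian

section SumEqZero

variable {ι : Type*} [Fintype ι] {μ : ι → ℝ}

theorem card_mul_sq_le_of_sum_eq_zero (h : ∑ j, μ j = 0) (i : ι) :
    Fintype.card ι * μ i ^ 2 ≤ (Fintype.card ι - 1) * ∑ j, μ j ^ 2 := by
  classical
  have hrest : ∑ j ∈ univ.erase i, μ j = -μ i := by
    linarith [add_sum_erase univ μ (mem_univ i)]
  have hcs := sq_sum_le_card_mul_sum_sq (s := univ.erase i) (f := μ)
  rw [hrest, neg_sq, card_erase_of_mem (mem_univ i), card_univ,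
    Nat.cast_pred (Fintype.card_pos_iff.mpr ⟨i⟩)] at hcs
  nlinarith [add_sum_erase univ (fun j ↦ μ j ^ 2) (mem_univ i)]

theorem sum_cube_ge_of_forall_neg_le (a : ℝ) (hμ : ∀ i, -((Fintype.card ι - 1) * a) ≤ μ i) :
    -((Fintype.card ι - 3) * a * ∑ i, μ i ^ 2 + (3 - 2 * Fintype.card ι) * a ^ 2 * ∑ i, μ i +
      Fintype.card ι * (Fintype.card ι - 1) * a ^ 3) ≤ ∑ i, μ i ^ 3 := by
  have hpos : 0 ≤ ∑ i, (μ i - a) ^ 2 * (μ i + (Fintype.card ι - 1) * a) :=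
    sum_nonneg fun i _ ↦ mul_nonneg (sq_nonneg _) (by linarith [hμ i])
  have hexpand : ∑ i, (μ i - a) ^ 2 * (μ i + (Fintype.card ι - 1) * a) =
      ∑ i, (μ i ^ 3 + (Fintype.card ι - 3) * a * μ i ^ 2 + (3 - 2 * Fintype.card ι) * a ^ 2 * μ i +
        (Fintype.card ι - 1) * a ^ 3) :=
    sum_congr rfl fun i _ ↦ by ring
  simp only [hexpand, sum_add_distrib, ← mul_sum, sum_const, card_univ, nsmul_eq_mul] at hpos
  linarith

theorem sum_cube_ge_of_sum_eq_zero (h : ∑ i, μ i = 0) :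
    -((Fintype.card ι - 2 : ℝ) / √(Fintype.card ι * (Fintype.card ι - 1))) *
      √(∑ i, μ i ^ 2) ^ 3 ≤ ∑ i, μ i ^ 3 := by
  rcases le_or_gt (Fintype.card ι) 1 with hcard | hcard
  · have : Subsingleton ι := Fintype.card_le_one_iff_subsingleton.mp hcard
    have hμ : μ = 0 := funext fun i ↦ by rwa [Fintype.sum_subsingleton _ i] at h
    simp [hμ]
  set n : ℝ := (Fintype.card ι : ℝ)
  have hn : 2 ≤ n := Nat.ofNat_le_cast.mpr hcard
  set c := √(n * (n - 1))
  have hc : 0 < c := Real.sqrt_pos.mpr (by nlinarith)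
  have hc2 : c ^ 2 = n * (n - 1) := Real.sq_sqrt (by nlinarith)
  set s := √(∑ i, μ i ^ 2)
  have hs2 : s ^ 2 = ∑ i, μ i ^ 2 := Real.sq_sqrt (sum_nonneg fun i _ ↦ sq_nonneg _)
  set a := s / c
  have hsa : s = c * a := (mul_div_cancel₀ s hc.ne').symm
  have hlower (i : ι) : -((n - 1) * a) ≤ μ i := by
    have := card_mul_sq_le_of_sum_eq_zero h i
    have hsq : μ i ^ 2 ≤ ((n - 1) * a) ^ 2 := by
      rw [← hs2, hsa, mul_pow, hc2] at this
      nlinarith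
    have ha : 0 ≤ a := div_nonneg (Real.sqrt_nonneg _) hc.le
    exact (abs_le_of_sq_le_sq' hsq (by nlinarith)).1
  have hcube := sum_cube_ge_of_forall_neg_le a hlower
  rw [h, ← hs2, hsa, mul_pow, hc2] at hcube
  have hlhs : (n - 2) / c * (c * a) ^ 3 = (n - 2) * c ^ 2 * a ^ 3 := by
    field_simp
  rw [hsa, neg_mul, hlhs, hc2]
  linarith

end SumEqZero

theorem cubic_trace_lower_bound_general (n : ℕ)
    (T : Matrix (Fin n) (Fin n) ℝ) (hsymm : T.IsSymm) (htr : T.trace = 0) :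
    -((n - 2 : ℝ) / Real.sqrt (n * (n - 1))) * Real.sqrt ((T * T).trace) ^ 3 ≤
      (T * T * T).trace := by
  have hT : T.IsHermitian := isHermitian_iff_isSymm.mpr hsymm
  have htrace (k : ℕ) : (T ^ k).trace = ∑ i, hT.eigenvalues i ^ k := by
    simpa using hT.trace_pow_eq_sum_eigenvalues_pow k
  have hsum : ∑ i, hT.eigenvalues i = 0 := by
    simpa only [pow_one, htr] using (htrace 1).symm
  rw [← pow_three', ← sq, htrace, htrace]
  simpa using sum_cube_ge_of_sum_eq_zero hsum

/-- Huisken's estimate: for any symmetric trace-free bilinear form (matrix) `T` on an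
`n`-dimensional real inner product space (`n ≥ 2`), the cubic trace satisfies
`tr(T³) ≥ -((n-2)/√(n(n-1))) · |T|³`, where `|T| = √(tr(T²))` is the Frobenius norm. -/
theorem cubic_trace_lower_bound (n : ℕ) (hn : 2 ≤ n)
    (T : Matrix (Fin n) (Fin n) ℝ) (hsymm : T.IsSymm) (htr : T.trace = 0) :
    -((n - 2 : ℝ) / Real.sqrt (n * (n - 1))) * Real.sqrt ((T * T).trace) ^ 3 ≤
      (T * T * T).trace :=
  cubic_trace_lower_bound_general n T hsymm htr
end

section
/- For a 4-tensor W with the symmetries of the Weyl tensor (Riemann-type symmetries and all traces zero) and a symmetric trace-free 2-tensor T on an n-dimensional inner product space (n ≥ 3), the contraction satisfies |W_ijkl T^ik T^jl| ≤ √((n-2)/(2(n-1))) · |W| · |T|². -/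
open Finset

/-!
View a 4-tensor as a matrix on `ι × ι` via `X (i, j) (k, l) = X_ijkl`: then `T_ik T_jl` is the
Kronecker square `T ⊗ₖ T`, the Frobenius pairing is `trace (Xᵀ * Y)`, and swapping `k, l` is right
multiplication by a permutation matrix. Since `W` is trace-free it is orthogonal to `1 ⊗ₖ B` and
`B ⊗ₖ 1` for every `B`, and since it is antisymmetric in `k, l`, `2 ⟨W, T ⊗ₖ T⟩ = ⟨W, C⟩` for the
antisymmetrization `C` of `T ⊗ₖ T - 1 ⊗ₖ B - B ⊗ₖ 1`. Cauchy–Schwarz bounds the contraction by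
`|W| |C| / 2`. The Schouten-type choice `B = (n-2)⁻¹ (|T|²/(2(n-1)) · 1 - T²)` gives
`|C|² = 2(n-2)/(n-1) |T|⁴ - 2 (n |T²|² - |T|⁴)/(n-2)`, and `|T|⁴ = (tr T²)² ≤ n |T²|²`.
-/

open Matrix
open scoped Kronecker

namespace WeylContraction

section Frobenius

variable {m n R : Type*} [Fintype m] [Fintype n]

lemma trace_transpose_mul_eq_sum [AddCommMonoid R] [Mul R] (X Y : Matrix m n R) :
    trace (Xᵀ * Y) = ∑ i, ∑ j, X i j * Y i j := by
  simp only [trace, Matrix.diag, mul_apply, transpose_apply]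
  exact Finset.sum_comm

variable [CommRing R] [LinearOrder R] [IsStrictOrderedRing R]

lemma trace_transpose_mul_self_nonneg (X : Matrix m n R) : 0 ≤ trace (Xᵀ * X) := by
  rw [trace_transpose_mul_eq_sum]
  exact sum_nonneg fun i _ => sum_nonneg fun j _ => mul_self_nonneg (X i j)

lemma sq_trace_transpose_mul_le (X Y : Matrix m n R) :
    trace (Xᵀ * Y) ^ 2 ≤ trace (Xᵀ * X) * trace (Yᵀ * Y) := by
  simp only [trace_transpose_mul_eq_sum, ← sq, ← Fintype.sum_prod_type']
  exact sum_mul_sq_le_sq_mul_sq _ _ _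

lemma sq_trace_le_card_mul (A : Matrix n n R) :
    trace A ^ 2 ≤ Fintype.card n * trace (Aᵀ * A) := by
  calc trace A ^ 2 ≤ Fintype.card n * ∑ i, A i i ^ 2 := by
        simpa [trace] using sq_sum_le_card_mul_sum_sq (s := univ) (f := fun i => A i i)
    _ ≤ Fintype.card n * trace (Aᵀ * A) := by
        rw [trace_transpose_mul_eq_sum]
        gcongr with i
        simp only [← sq]
        exact single_le_sum (fun j _ => sq_nonneg (A i j)) (mem_univ i)

end Frobenius

section Kronecker

lemma trace_kronecker_mul_kronecker {ι R : Type*} [Fintype ι] [CommRing R]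
    (A B C D : Matrix ι ι R) :
    trace (A ⊗ₖ B * C ⊗ₖ D) = trace (A * C) * trace (B * D) := by
  rw [← mul_kronecker_mul, trace_kronecker]

variable {ι R : Type*} [DecidableEq ι]

variable (ι R) in
def swapMatrix [Zero R] [One R] : Matrix (ι × ι) (ι × ι) R :=
  Equiv.Perm.permMatrix R (Equiv.prodComm ι ι)

lemma transpose_swapMatrix [Zero R] [One R] : (swapMatrix ι R)ᵀ = swapMatrix ι R := by
  rw [swapMatrix, transpose_permMatrix]
  rfl

variable [CommRing R]

def tensorSqSubTrace (T B : Matrix ι ι R) : Matrix (ι × ι) (ι × ι) R :=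
  T ⊗ₖ T - 1 ⊗ₖ B - B ⊗ₖ 1

lemma transpose_tensorSqSubTrace {T B : Matrix ι ι R} (hT : Tᵀ = T) (hB : Bᵀ = B) :
    (tensorSqSubTrace T B)ᵀ = tensorSqSubTrace T B := by
  simp [tensorSqSubTrace, ← kroneckerMap_transpose, hT, hB]

variable [Fintype ι]

lemma mul_swapMatrix (M : Matrix (ι × ι) (ι × ι) R) :
    M * swapMatrix ι R = M.submatrix id Prod.swap :=
  PEquiv.mul_toMatrix_toPEquiv _ _

lemma swapMatrix_mul_self : swapMatrix ι R * swapMatrix ι R = 1 := by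
  rw [mul_swapMatrix]
  ext p q
  simp [swapMatrix, one_apply, Prod.swap_eq_iff_eq_swap]

lemma trace_kronecker_mul_swapMatrix (A B : Matrix ι ι R) :
    trace (A ⊗ₖ B * swapMatrix ι R) = trace (A * B) := by
  simp [mul_swapMatrix, trace, Fintype.sum_prod_type, mul_apply]

lemma trace_kronecker_mul_kronecker_mul_swapMatrix (A B C D : Matrix ι ι R) :
    trace (A ⊗ₖ B * C ⊗ₖ D * swapMatrix ι R) = trace (A * C * (B * D)) := by
  rw [← mul_kronecker_mul, trace_kronecker_mul_swapMatrix]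

def antisymmetrize (M : Matrix (ι × ι) (ι × ι) R) : Matrix (ι × ι) (ι × ι) R :=
  M - M * swapMatrix ι R

lemma trace_transpose_antisymmetrize_mul_self (M : Matrix (ι × ι) (ι × ι) R) :
    trace ((antisymmetrize M)ᵀ * antisymmetrize M)
      = 2 * trace (Mᵀ * M) - 2 * trace (Mᵀ * M * swapMatrix ι R) := by
  have hP := swapMatrix_mul_self (ι := ι) (R := R)
  simp only [antisymmetrize, transpose_sub, transpose_mul, transpose_swapMatrix, sub_mul,
    mul_sub, trace_sub]
  have h₁ : trace (swapMatrix ι R * Mᵀ * M) = trace (Mᵀ * M * swapMatrix ι R) := by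
    rw [Matrix.mul_assoc, trace_mul_comm]
  have h₂ : trace (swapMatrix ι R * Mᵀ * (M * swapMatrix ι R)) = trace (Mᵀ * M) := by
    rw [← Matrix.mul_assoc, trace_mul_comm, ← Matrix.mul_assoc, ← Matrix.mul_assoc, hP,
      Matrix.one_mul]
  rw [h₁, h₂, ← Matrix.mul_assoc]
  ring

lemma trace_tensorSqSubTrace_mul_self (T B : Matrix ι ι R) :
    trace (tensorSqSubTrace T B * tensorSqSubTrace T B)
      = trace (T * T) ^ 2 + 2 * Fintype.card ι * trace (B * B) + 2 * trace B ^ 2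
        - 4 * trace T * trace (T * B) := by
  simp only [tensorSqSubTrace, sub_mul, mul_sub, trace_sub, trace_kronecker_mul_kronecker,
    Matrix.mul_one, Matrix.one_mul, trace_one]
  rw [trace_mul_comm B T]
  ring

lemma trace_tensorSqSubTrace_mul_self_mul_swapMatrix (T B : Matrix ι ι R) :
    trace (tensorSqSubTrace T B * tensorSqSubTrace T B * swapMatrix ι R)
      = trace (T * T * (T * T)) + 4 * trace (B * B) - 4 * trace (T * T * B) := by
  simp only [tensorSqSubTrace, sub_mul, mul_sub, trace_sub,
    trace_kronecker_mul_kronecker_mul_swapMatrix, Matrix.mul_one, Matrix.one_mul]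
  have hBTT : trace (B * T * T) = trace (T * T * B) := by
    rw [Matrix.mul_assoc, trace_mul_comm]
  have hTBT : trace (T * B * T) = trace (T * T * B) := by
    rw [trace_mul_comm, ← Matrix.mul_assoc]
  rw [← Matrix.mul_assoc T B T, ← Matrix.mul_assoc T T B, hBTT, hTBT]
  ring

lemma trace_transpose_antisymmetrize_tensorSqSubTrace_mul_self {T B : Matrix ι ι R}
    (hT : Tᵀ = T) (hB : Bᵀ = B) :
    trace ((antisymmetrize (tensorSqSubTrace T B))ᵀ * antisymmetrize (tensorSqSubTrace T B))
      = 2 * (trace (T * T) ^ 2 + 2 * Fintype.card ι * trace (B * B) + 2 * trace B ^ 2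
          - 4 * trace T * trace (T * B))
        - 2 * (trace (T * T * (T * T)) + 4 * trace (B * B) - 4 * trace (T * T * B)) := by
  rw [trace_transpose_antisymmetrize_mul_self, transpose_tensorSqSubTrace hT hB,
    trace_tensorSqSubTrace_mul_self, trace_tensorSqSubTrace_mul_self_mul_swapMatrix]

lemma trace_transpose_mul_antisymmetrize {X : Matrix (ι × ι) (ι × ι) R}
    (hX : X * swapMatrix ι R = -X) (M : Matrix (ι × ι) (ι × ι) R) :
    trace (Xᵀ * antisymmetrize M) = 2 * trace (Xᵀ * M) := by
  have h : trace (Xᵀ * (M * swapMatrix ι R)) = -trace (Xᵀ * M) := by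
    rw [← Matrix.mul_assoc, trace_mul_comm, ← Matrix.mul_assoc, ← transpose_swapMatrix,
      ← transpose_mul, hX, transpose_neg, Matrix.neg_mul, trace_neg]
  rw [antisymmetrize, Matrix.mul_sub, trace_sub, h]
  ring

lemma trace_transpose_mul_tensorSqSubTrace {X : Matrix (ι × ι) (ι × ι) R}
    (htr₁ : ∀ j l, ∑ i, X (i, j) (i, l) = 0) (htr₂ : ∀ i k, ∑ j, X (i, j) (k, j) = 0)
    (T B : Matrix ι ι R) :
    trace (Xᵀ * tensorSqSubTrace T B) = trace (Xᵀ * (T ⊗ₖ T)) := by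
  have h₁ : trace (Xᵀ * (1 ⊗ₖ B)) = 0 := by
    simp only [trace_transpose_mul_eq_sum, kroneckerMap_apply, one_apply, ite_mul, one_mul,
      zero_mul, mul_ite, mul_zero, Fintype.sum_prod_type, sum_ite_irrel, sum_const_zero,
      sum_ite_eq, mem_univ, if_true]
    rw [sum_comm]
    refine sum_eq_zero fun j _ => ?_
    rw [sum_comm]
    simp [← sum_mul, htr₁]
  have h₂ : trace (Xᵀ * (B ⊗ₖ 1)) = 0 := by
    simp only [trace_transpose_mul_eq_sum, kroneckerMap_apply, one_apply, mul_ite, mul_one,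
      mul_zero, Fintype.sum_prod_type, sum_ite_eq, mem_univ, if_true]
    refine sum_eq_zero fun i _ => ?_
    rw [sum_comm]
    simp [← sum_mul, htr₂]
  rw [tensorSqSubTrace, Matrix.mul_sub, Matrix.mul_sub, trace_sub, trace_sub, h₁, h₂]
  ring

end Kronecker

section Schouten

variable {ι K : Type*} [Fintype ι] [DecidableEq ι] [Field K]

variable (ι) in
def schoutenCorrection (T : Matrix ι ι K) : Matrix ι ι K :=
  ((Fintype.card ι : K) - 2)⁻¹ • ((trace (T * T) / (2 * ((Fintype.card ι : K) - 1))) • 1 - T * T)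

lemma transpose_schoutenCorrection {T : Matrix ι ι K} (hT : Tᵀ = T) :
    (schoutenCorrection ι T)ᵀ = schoutenCorrection ι T := by
  simp [schoutenCorrection, transpose_mul, hT]

lemma trace_transpose_antisymmetrize_schouten_mul_self [CharZero K] {T : Matrix ι ι K}
    (hT : Tᵀ = T) (htr : trace T = 0)
    (h₁ : (Fintype.card ι : K) - 1 ≠ 0) (h₂ : (Fintype.card ι : K) - 2 ≠ 0) :
    trace ((antisymmetrize (tensorSqSubTrace T (schoutenCorrection ι T)))ᵀ
        * antisymmetrize (tensorSqSubTrace T (schoutenCorrection ι T)))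
      = 2 * ((Fintype.card ι : K) - 2) / ((Fintype.card ι : K) - 1) * trace (T * T) ^ 2
        - 2 * ((Fintype.card ι : K) * trace (T * T * (T * T)) - trace (T * T) ^ 2)
          / ((Fintype.card ι : K) - 2) := by
  rw [trace_transpose_antisymmetrize_tensorSqSubTrace_mul_self hT
    (transpose_schoutenCorrection hT), htr]
  simp only [schoutenCorrection, Matrix.mul_smul, Matrix.smul_mul, Matrix.mul_sub,
    Matrix.sub_mul, Matrix.mul_one, Matrix.one_mul, trace_smul, trace_sub, trace_one, smul_eq_mul,
    Matrix.mul_assoc]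
  field_simp
  ring

end Schouten

lemma abs_trace_transpose_mul_kronecker_self_le {ι : Type*} [Fintype ι] [DecidableEq ι]
    (hcard : 3 ≤ Fintype.card ι) {X : Matrix (ι × ι) (ι × ι) ℝ}
    (hswap : X * swapMatrix ι ℝ = -X) (htr₁ : ∀ j l, ∑ i, X (i, j) (i, l) = 0)
    (htr₂ : ∀ i k, ∑ j, X (i, j) (k, j) = 0) {T : Matrix ι ι ℝ} (hT : Tᵀ = T)
    (htrT : trace T = 0) :
    |trace (Xᵀ * (T ⊗ₖ T))| ≤
      √((Fintype.card ι - 2 : ℝ) / (2 * (Fintype.card ι - 1))) * √(trace (Xᵀ * X))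
        * trace (Tᵀ * T) := by
  have hN : (3 : ℝ) ≤ Fintype.card ι := by exact_mod_cast hcard
  set N : ℝ := (Fintype.card ι : ℝ)
  set C := antisymmetrize (tensorSqSubTrace T (schoutenCorrection ι T))
  have hK : 0 ≤ (N - 2) / (2 * (N - 1)) := div_nonneg (by linarith) (by linarith)
  have hXC : trace (Xᵀ * C) = 2 * trace (Xᵀ * (T ⊗ₖ T)) := by
    rw [trace_transpose_mul_antisymmetrize hswap, trace_transpose_mul_tensorSqSubTrace htr₁ htr₂]
  have hC : trace (Cᵀ * C) ≤ 2 * (N - 2) / (N - 1) * trace (Tᵀ * T) ^ 2 := by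
    have hq := sq_trace_le_card_mul (T * T)
    rw [transpose_mul, hT] at hq
    rw [trace_transpose_antisymmetrize_schouten_mul_self hT htrT (by linarith) (by linarith), hT]
    exact sub_le_self _ (div_nonneg (by linarith) (by linarith))
  have hsq : trace (Xᵀ * (T ⊗ₖ T)) ^ 2
      ≤ (N - 2) / (2 * (N - 1)) * trace (Xᵀ * X) * trace (Tᵀ * T) ^ 2 := by
    have hCS := (sq_trace_transpose_mul_le X C).trans
      (mul_le_mul_of_nonneg_left hC (trace_transpose_mul_self_nonneg X))
    rw [hXC] at hCS
    calc trace (Xᵀ * (T ⊗ₖ T)) ^ 2 = (2 * trace (Xᵀ * (T ⊗ₖ T))) ^ 2 / 4 := by ring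
      _ ≤ trace (Xᵀ * X) * (2 * (N - 2) / (N - 1) * trace (Tᵀ * T) ^ 2) / 4 := by gcongr
      _ = (N - 2) / (2 * (N - 1)) * trace (Xᵀ * X) * trace (Tᵀ * T) ^ 2 := by
        have : N - 1 ≠ 0 := by linarith
        field_simp
        ring
  calc |trace (Xᵀ * (T ⊗ₖ T))|
      ≤ √((N - 2) / (2 * (N - 1)) * trace (Xᵀ * X) * trace (Tᵀ * T) ^ 2) :=
        Real.abs_le_sqrt hsq
    _ = √((N - 2) / (2 * (N - 1))) * √(trace (Xᵀ * X)) * trace (Tᵀ * T) := by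
        rw [Real.sqrt_mul (mul_nonneg hK (trace_transpose_mul_self_nonneg X)), Real.sqrt_mul hK,
          Real.sqrt_sq (trace_transpose_mul_self_nonneg T)]

end WeylContraction

theorem weyl_contraction_estimate_general (n : ℕ) (hn : 3 ≤ n)
    (W : Fin n → Fin n → Fin n → Fin n → ℝ)
    (hW1 : ∀ i j k l, W i j k l = -W j i k l)
    (hW2 : ∀ i j k l, W i j k l = -W i j l k)
    (htraceW : ∀ j l, ∑ i, W i j i l = 0)
    (T : Matrix (Fin n) (Fin n) ℝ) (hT : T.IsSymm) (htrT : T.trace = 0) :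
    |∑ i, ∑ j, ∑ k, ∑ l, W i j k l * T i k * T j l| ≤
      Real.sqrt ((n - 2 : ℝ) / (2 * (n - 1))) *
        Real.sqrt (∑ i, ∑ j, ∑ k, ∑ l, (W i j k l) ^ 2) *
        (∑ i, ∑ j, (T i j) ^ 2) := by
  let X : Matrix (Fin n × Fin n) (Fin n × Fin n) ℝ := of fun p q => W p.1 p.2 q.1 q.2
  have hswap : X * WeylContraction.swapMatrix (Fin n) ℝ = -X := by
    rw [WeylContraction.mul_swapMatrix]
    ext p q
    exact hW2 p.1 p.2 q.2 q.1
  have hW : ∀ i j k, W i j k j = W j i j k := fun i j k => by rw [hW1, hW2, neg_neg]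
  have htr₂ : ∀ i k, ∑ j, X (i, j) (k, j) = 0 := fun i k =>
    (sum_congr rfl fun j _ => hW i j k).trans (htraceW i k)
  have key := WeylContraction.abs_trace_transpose_mul_kronecker_self_le (by simpa using hn)
    hswap htraceW htr₂ hT.eq htrT
  simpa [WeylContraction.trace_transpose_mul_eq_sum, Fintype.sum_prod_type, X, mul_assoc, sq]
    using key

/-- Huisken's estimate on the Weyl contraction: for a 4-tensor `W` with the symmetries of the
Weyl tensor (Riemann-type symmetries, first Bianchi identity, and all traces zero) and a
symmetric trace-free 2-tensor `T` on an `n`-dimensional inner product space (`n ≥ 3`),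
`|W_ijkl T^ik T^jl| ≤ √((n-2)/(2(n-1))) · |W| · |T|²` (Frobenius norms). -/
theorem weyl_contraction_estimate (n : ℕ) (hn : 3 ≤ n)
    (W : Fin n → Fin n → Fin n → Fin n → ℝ)
    (hW1 : ∀ i j k l, W i j k l = -W j i k l)
    (hW2 : ∀ i j k l, W i j k l = -W i j l k)
    (hW3 : ∀ i j k l, W i j k l = W k l i j)
    (hBianchi : ∀ i j k l, W i j k l + W i k l j + W i l j k = 0)
    (htraceW : ∀ j l, ∑ i, W i j i l = 0)
    (T : Matrix (Fin n) (Fin n) ℝ) (hT : T.IsSymm) (htrT : T.trace = 0) :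
    |∑ i, ∑ j, ∑ k, ∑ l, W i j k l * T i k * T j l| ≤
      Real.sqrt ((n - 2 : ℝ) / (2 * (n - 1))) *
        Real.sqrt (∑ i, ∑ j, ∑ k, ∑ l, (W i j k l) ^ 2) *
        (∑ i, ∑ j, (T i j) ^ 2) :=
  weyl_contraction_estimate_general n hn W hW1 hW2 htraceW T hT htrT
end

section
/- Let f be a smooth function on a complete Riemannian manifold with (1/4)(r(q) - c₁)² ≤ f(q) ≤ (1/4)(r(q) + c₁)² for all q (r = distance to a fixed point p) and Vol(B_ρ(p)) ≤ c₂ρⁿ for large ρ, and suppose R ≥ 0 satisfies R ≤ f + C for a constant C. Then ∫_M R² e^{-f} dV < ∞. -/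
/-!
Since `R ≤ f + C` and `t² e^{-t} ≲ e^{-t/2}`, the integrand is at most a multiple of
`e^{-f/2} ≤ e^{-(r - c₁)²/8}`, which decays faster than `e^{-r}`. Cutting `M` into the shells
`k ≤ r < k + 1`, the integral of `e^{-r}` is bounded by `∑ₖ e^{-k} Vol(B_{k+1}(p))`, and this series
converges because the volume of balls grows only polynomially.
-/

open MeasureTheory Metric Real Filter

theorem sq_mul_exp_neg_le {t : ℝ} (ht : 0 ≤ t) : t ^ 2 * exp (-t) ≤ 16 * exp (-t / 2) := by
  have hlin : t / 4 + 1 ≤ exp (t / 4) := add_one_le_exp _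
  have hsq : exp (t / 2) = exp (t / 4) ^ 2 := by rw [← exp_nat_mul]; ring_nf
  have ht2 : t ^ 2 ≤ 16 * exp (t / 2) := by nlinarith
  calc t ^ 2 * exp (-t) ≤ 16 * exp (t / 2) * exp (-t) := by gcongr
    _ = 16 * exp (-t / 2) := by rw [mul_assoc, ← exp_add]; ring_nf

theorem sq_mul_exp_neg_le_of_le_add {r t C : ℝ} (hr : 0 ≤ r) (hrt : r ≤ t + C) (ht : 0 ≤ t) :
    r ^ 2 * exp (-t) ≤ (32 + 2 * C ^ 2) * exp (-t / 2) := by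
  have hr2 : r ^ 2 ≤ 2 * t ^ 2 + 2 * C ^ 2 := by nlinarith [sq_nonneg (t - C)]
  have hexp : exp (-t) ≤ exp (-t / 2) := exp_le_exp.mpr (by linarith)
  calc r ^ 2 * exp (-t) ≤ (2 * t ^ 2 + 2 * C ^ 2) * exp (-t) := by gcongr
    _ = 2 * (t ^ 2 * exp (-t)) + 2 * C ^ 2 * exp (-t) := by ring
    _ ≤ 2 * (16 * exp (-t / 2)) + 2 * C ^ 2 * exp (-t / 2) := by
        have := sq_mul_exp_neg_le ht
        gcongr
    _ = (32 + 2 * C ^ 2) * exp (-t / 2) := by ring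

theorem exp_neg_sq_sub_div_eight_le (d c : ℝ) :
    exp (-((d - c) ^ 2 / 8)) ≤ exp (c + 2) * exp (-d) := by
  rw [← exp_add, exp_le_exp]
  nlinarith [sq_nonneg (d - c - 4)]

section MetricMeasure

variable {M : Type*} [PseudoMetricSpace M]

theorem iUnion_ball_nat_succ_diff_ball (p : M) :
    ⋃ k : ℕ, ball p ((k : ℝ) + 1) \ ball p k = Set.univ := by
  refine Set.eq_univ_of_forall fun q => Set.mem_iUnion.mpr ⟨⌊dist q p⌋₊, ?_, ?_⟩
  · exact mem_ball.mpr (Nat.lt_floor_add_one _)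
  · exact fun hq => (mem_ball.mp hq).not_ge (Nat.floor_le dist_nonneg)

variable [MeasurableSpace M] {μ : Measure M} {p : M}

theorem exists_measure_ball_le_of_one_le {n : ℕ} {c : ℝ}
    (h : ∃ ρ₀ : ℝ, ∀ ρ : ℝ, ρ₀ ≤ ρ → μ (ball p ρ) ≤ ENNReal.ofReal (c * ρ ^ n)) :
    ∃ c' : ℝ, ∀ ρ : ℝ, 1 ≤ ρ → μ (ball p ρ) ≤ ENNReal.ofReal (c' * ρ ^ n) := by
  obtain ⟨ρ₀, hρ₀⟩ := h
  set m := max ρ₀ 1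
  have hm : 1 ≤ m := le_max_right _ _
  refine ⟨c * m ^ n, fun ρ hρ => ?_⟩
  calc μ (ball p ρ) ≤ μ (ball p (ρ * m)) :=
        measure_mono (ball_subset_ball (le_mul_of_one_le_right (by linarith) hm))
    _ ≤ ENNReal.ofReal (c * (ρ * m) ^ n) :=
        hρ₀ _ ((le_max_left ρ₀ 1).trans (le_mul_of_one_le_left (by linarith) hρ))
    _ = ENNReal.ofReal (c * m ^ n * ρ ^ n) := by ring_nf

theorem lintegral_le_tsum_mul_measure_ball [OpensMeasurableSpace M] (g : M → ENNReal)
    (b : ℕ → ENNReal) (hg : ∀ (k : ℕ) (q : M), (k : ℝ) ≤ dist q p → g q ≤ b k) :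
    ∫⁻ q, g q ∂μ ≤ ∑' k : ℕ, b k * μ (ball p ((k : ℝ) + 1)) :=
  calc ∫⁻ q, g q ∂μ = ∫⁻ q in ⋃ k : ℕ, ball p ((k : ℝ) + 1) \ ball p k, g q ∂μ := by
        rw [iUnion_ball_nat_succ_diff_ball, setLIntegral_univ]
    _ ≤ ∑' k : ℕ, ∫⁻ q in ball p ((k : ℝ) + 1) \ ball p k, g q ∂μ := lintegral_iUnion_le _ _
    _ ≤ ∑' k : ℕ, b k * μ (ball p ((k : ℝ) + 1)) := by
        refine ENNReal.tsum_le_tsum fun k => ?_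
        calc ∫⁻ q in ball p ((k : ℝ) + 1) \ ball p k, g q ∂μ
            ≤ ∫⁻ _ in ball p ((k : ℝ) + 1) \ ball p k, b k ∂μ :=
              setLIntegral_mono' (measurableSet_ball.diff measurableSet_ball)
                fun q hq => hg k q (not_lt.mp hq.2)
          _ ≤ b k * μ (ball p ((k : ℝ) + 1)) := by
              rw [setLIntegral_const]
              exact mul_le_mul_right (measure_mono Set.sdiff_subset) _

theorem integrable_exp_neg_mul_dist [OpensMeasurableSpace M] {n : ℕ} {a c : ℝ} (ha : 0 < a)
    (hvol : ∀ ρ : ℝ, 1 ≤ ρ → μ (ball p ρ) ≤ ENNReal.ofReal (c * ρ ^ n)) :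
    Integrable (fun q => exp (-(a * dist q p))) μ := by
  refine ⟨(by fun_prop : Continuous fun q => exp (-(a * dist q p))).aestronglyMeasurable, ?_⟩
  set r := exp (-a)
  have hr0 : r ≠ 0 := (exp_pos _).ne'
  have hr : ‖r‖ < 1 := by rw [norm_of_nonneg (exp_nonneg _)]; exact exp_lt_one_iff.mpr (by linarith)
  have hsum : Summable fun k : ℕ => c / r * (((k + 1 : ℕ) : ℝ) ^ n * r ^ (k + 1)) :=
    ((summable_nat_add_iff 1 (f := fun k : ℕ => (k : ℝ) ^ n * r ^ k)).mpr
      (summable_pow_mul_geometric_of_norm_lt_one n hr)).mul_left _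
  have hdecay : ∀ (k : ℕ) (q : M), (k : ℝ) ≤ dist q p →
      ENNReal.ofReal (exp (-(a * dist q p))) ≤ ENNReal.ofReal (r ^ k) := by
    intro k q hk
    rw [← exp_nat_mul]
    exact ENNReal.ofReal_le_ofReal (exp_le_exp.mpr (by nlinarith))
  rw [hasFiniteIntegral_iff_ofReal (Eventually.of_forall fun q => (exp_pos _).le)]
  calc ∫⁻ q, ENNReal.ofReal (exp (-(a * dist q p))) ∂μ
      ≤ ∑' k : ℕ, ENNReal.ofReal (r ^ k) * μ (ball p ((k : ℝ) + 1)) :=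
        lintegral_le_tsum_mul_measure_ball _ _ hdecay
    _ ≤ ∑' k : ℕ, ENNReal.ofReal (c / r * (((k + 1 : ℕ) : ℝ) ^ n * r ^ (k + 1))) := by
        refine ENNReal.tsum_le_tsum fun k => ?_
        calc ENNReal.ofReal (r ^ k) * μ (ball p ((k : ℝ) + 1))
            ≤ ENNReal.ofReal (r ^ k) * ENNReal.ofReal (c * ((k : ℝ) + 1) ^ n) :=
              mul_le_mul_right (hvol _ (by simp)) _
          _ = ENNReal.ofReal (c / r * (((k + 1 : ℕ) : ℝ) ^ n * r ^ (k + 1))) := by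
              rw [← ENNReal.ofReal_mul (by positivity)]
              congr 1
              push_cast
              field_simp
              ring
    _ < ⊤ := hsum.tsum_ofReal_lt_top

end MetricMeasure

theorem scalar_sq_weighted_integrable_general {M : Type*} [MetricSpace M] [MeasurableSpace M]
    [OpensMeasurableSpace M] (μ : Measure M)
    (n : ℕ) (p : M) (f R : M → ℝ) (c₁ c₂ C : ℝ)
    (hfmeas : Measurable f) (hRmeas : Measurable R)
    (hf : ∀ q, (dist q p - c₁) ^ 2 / 4 ≤ f q ∧ f q ≤ (dist q p + c₁) ^ 2 / 4)
    (hvol : ∃ ρ₀ : ℝ, ∀ ρ : ℝ, ρ₀ ≤ ρ → μ (Metric.ball p ρ) ≤ ENNReal.ofReal (c₂ * ρ ^ n))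
    (hR : ∀ q, 0 ≤ R q ∧ R q ≤ f q + C) :
    Integrable (fun q => R q ^ 2 * Real.exp (-f q)) μ := by
  obtain ⟨c, hc⟩ := exists_measure_ball_le_of_one_le hvol
  have hmajorant := (integrable_exp_neg_mul_dist one_pos hc).const_mul
    ((32 + 2 * C ^ 2) * exp (c₁ + 2))
  refine hmajorant.mono' ((hRmeas.pow_const 2).mul hfmeas.neg.exp).aestronglyMeasurable
    (Eventually.of_forall fun q => ?_)
  obtain ⟨hf_lower, -⟩ := hf q
  obtain ⟨hR_nonneg, hR_le⟩ := hR q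
  have hf_nonneg : 0 ≤ f q := le_trans (by positivity) hf_lower
  rw [norm_of_nonneg (by positivity)]
  calc R q ^ 2 * exp (-f q) ≤ (32 + 2 * C ^ 2) * exp (-f q / 2) :=
        sq_mul_exp_neg_le_of_le_add hR_nonneg hR_le hf_nonneg
    _ ≤ (32 + 2 * C ^ 2) * exp (-((dist q p - c₁) ^ 2 / 8)) := by gcongr; linarith
    _ ≤ (32 + 2 * C ^ 2) * (exp (c₁ + 2) * exp (-dist q p)) := by
        gcongr
        exact exp_neg_sq_sub_div_eight_le _ _
    _ = (32 + 2 * C ^ 2) * exp (c₁ + 2) * exp (-(1 * dist q p)) := by rw [one_mul]; ring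

/-- Cao–Zhou type integrability: on a complete `n`-dimensional Riemannian manifold
(abstracted as a metric measure space, with `μ` the Riemannian volume `dV`), if a smooth
function `f` satisfies `(1/4)(r(q) - c₁)² ≤ f(q) ≤ (1/4)(r(q) + c₁)²` with `r = dist(·, p)`,
the volume of balls satisfies `Vol(B_ρ(p)) ≤ c₂ ρⁿ` for all large `ρ`, and `R ≥ 0` satisfies
`R ≤ f + C`, then `∫_M R² e^{-f} dV < ∞`. -/
theorem scalar_sq_weighted_integrable {M : Type*} [MetricSpace M] [MeasurableSpace M]
    [OpensMeasurableSpace M] (μ : Measure M)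
    (n : ℕ) (p : M) (f R : M → ℝ) (c₁ c₂ C : ℝ)
    (hc₁ : 0 < c₁) (hc₂ : 0 < c₂) (hC : 0 < C)
    (hfmeas : Measurable f) (hRmeas : Measurable R)
    (hf : ∀ q, (dist q p - c₁) ^ 2 / 4 ≤ f q ∧ f q ≤ (dist q p + c₁) ^ 2 / 4)
    (hvol : ∃ ρ₀ : ℝ, ∀ ρ : ℝ, ρ₀ ≤ ρ → μ (Metric.ball p ρ) ≤ ENNReal.ofReal (c₂ * ρ ^ n))
    (hR : ∀ q, 0 ≤ R q ∧ R q ≤ f q + C) :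
    Integrable (fun q => R q ^ 2 * Real.exp (-f q)) μ :=
  scalar_sq_weighted_integrable_general μ n p f R c₁ c₂ C hfmeas hRmeas hf hvol hR
end
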